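/- Let r ≥ 1 and let m_1, …, m_r be integers with m_j ≥ 2 for all j. Then for every n ≥ 0, the coefficient of q^n in the power series H_{(m_1,…,m_r)} is divisible by the product ∏_{t=1}^{r} 𝓜(m_t, t). -/

import Mathlib

/-!
Write `a_r(n)` for the coefficients of `H_{(m_1,…,m_r)}`, so that
`a_{r+1}(n) = ∑_{j ≤ m_{r+1} n} a_r(j)`. By induction on `r`, `a_r(n) = ∑_{j=1}^r c_j C(n, j)`
with every `c_j` divisible by `∏_{t ≤ r} 𝓜(m_t, t)`. In the inductive step the hockey-stick identity
and Pascal's rule turn `∑_{j ≤ N} C(j, i)` into `C(N, i) + C(N, i + 1)`, and for `1 ≤ i ≤ k` the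
function `n ↦ C(μ n, i)` is a combination of the `C(n, j)`, `1 ≤ j ≤ k`, whose coefficients (its
iterated forward differences at `0`) are divisible by `𝓜(μ, k)` because all of its values are:
`μ ∣ i C(μ n, i)` and `i ∣ lcm(1, …, k)`.
-/

/-- The operator `U_m` on `ℤ⟦q⟧`, sending `∑ a(n) qⁿ` to `∑ a(m·n) qⁿ`. -/
noncomputable def U (m : ℕ) (f : PowerSeries ℤ) : PowerSeries ℤ :=
  PowerSeries.mk fun n => PowerSeries.coeff (m * n) f

/-- `h r = q / (1-q)^(r+1)`; here `invUnitsSub 1` is the inverse of `1 - q` in `ℤ⟦q⟧`. -/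
noncomputable def h (r : ℕ) : PowerSeries ℤ :=
  PowerSeries.X * (PowerSeries.invUnitsSub (1 : ℤˣ)) ^ (r + 1)

/-- Auxiliary: the series `H` defined by recursion on a reversed index list. -/
noncomputable def HserRev : List ℕ → PowerSeries ℤ
  | [] => PowerSeries.X * PowerSeries.invUnitsSub (1 : ℤˣ)
  | mhead :: rest => U mhead (PowerSeries.invUnitsSub (1 : ℤˣ) * HserRev rest)

/-- `Hser [m₁, …, m_k] = H_{(m₁,…,m_k)}`: one has `Hser [] = H_∅ = q/(1-q)` and
`H_{(m₁,…,m_k)} = U_{m_k}((1/(1-q)) · H_{(m₁,…,m_{k-1})})`. -/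
noncomputable def Hser (l : List ℕ) : PowerSeries ℤ := HserRev l.reverse

/-- `𝓜(m,r) = m / gcd(m, lcm(1,…,r))`. -/
def Mcal (m r : ℕ) : ℕ := m / Nat.gcd m ((Finset.Icc 1 r).lcm id)

open Finset PowerSeries fwdDiff

theorem dvd_mul_choose_mul (μ i n : ℕ) : μ ∣ i * (μ * n).choose i := by
  obtain _ | i := i
  · simp
  by_cases hzero : μ * n = 0
  · simp [hzero]
  obtain ⟨N, hN⟩ := Nat.exists_eq_add_one_of_ne_zero hzero
  refine ⟨n * N.choose i, ?_⟩
  calc (i + 1) * (μ * n).choose (i + 1) = (N + 1) * N.choose i := by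
        rw [hN, Nat.add_one_mul_choose_eq, mul_comm]
    _ = μ * (n * N.choose i) := by rw [← hN, mul_assoc]

theorem Mcal_dvd_choose_mul {k i : ℕ} (hi : i ∈ Icc 1 k) (μ n : ℕ) :
    Mcal μ k ∣ (μ * n).choose i := by
  obtain rfl | hμ := Nat.eq_zero_or_pos μ
  · simp [Mcal, Nat.choose_eq_zero_of_lt (mem_Icc.1 hi).1]
  have hL : μ ∣ (μ * n).choose i * (Icc 1 k).lcm id :=
    (dvd_mul_choose_mul μ i n).trans (by rw [mul_comm]; exact mul_dvd_mul_left _ (dvd_lcm hi))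
  exact Nat.modEq_zero_iff_dvd.1
    (Nat.ModEq.cancel_right_div_gcd hμ (by rw [zero_mul]; exact Nat.modEq_zero_iff_dvd.2 hL))

section fwdDiff

variable {M G : Type*} [AddCommMonoid M] [AddCommGroup G]

theorem fwdDiff_iter_eq_zero_of_le {h : M} {f : M → G} {k l : ℕ} (hf : (Δ_[h])^[k] f = 0)
    (hkl : k ≤ l) : (Δ_[h])^[l] f = 0 := by
  obtain ⟨d, rfl⟩ := Nat.exists_eq_add_of_le hkl
  rw [add_comm, Function.iterate_add_apply, hf]
  exact Function.iterate_fixed (fwdDiff_const h 0) d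

theorem dvd_fwdDiff_iter {R : Type*} [CommRing R] (h : M) {d : R} {f : M → R}
    (hf : ∀ x, d ∣ f x) (k : ℕ) (y : M) : d ∣ (Δ_[h])^[k] f y := by
  rw [fwdDiff_iter_eq_sum_shift]
  exact dvd_sum fun j _ => by rw [zsmul_eq_mul]; exact (hf _).mul_left _

theorem eq_sum_Icc_choose_smul_fwdDiff_iter {f : ℕ → G} {k : ℕ} (hf : (Δ_[1])^[k + 1] f = 0)
    (h0 : f 0 = 0) (n : ℕ) : f n = ∑ j ∈ Icc 1 k, n.choose j • (Δ_[1])^[j] f 0 := by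
  have hnewton : f n = ∑ j ∈ range (n + 1), n.choose j • (Δ_[1])^[j] f 0 := by
    simpa using shift_eq_sum_fwdDiff_iter 1 f n 0
  have hvanish : ∀ j ∈ range (n + k + 1), j ∉ Icc 1 k → n.choose j • (Δ_[1])^[j] f 0 = 0 := by
    intro j _ hj
    obtain rfl | hkj : j = 0 ∨ k + 1 ≤ j := by simp only [mem_Icc] at hj; omega
    · simp [h0]
    · simp [fwdDiff_iter_eq_zero_of_le hf hkj]
  rw [hnewton, sum_subset (range_subset_range.2 (by omega : n + 1 ≤ n + k + 1)),
    sum_subset (fun j hj => by simp only [mem_Icc, mem_range] at hj ⊢; omega) hvanish]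
  intro j _ hj
  rw [Nat.choose_eq_zero_of_lt (by simpa using hj), zero_smul]

end fwdDiff

theorem fwdDiff_choose_mul_add (μ a i : ℕ) :
    Δ_[1] (fun n : ℕ => ((μ * n + a).choose (i + 1) : ℤ)) =
      ∑ t ∈ range μ, fun n : ℕ => ((μ * n + (a + t)).choose i : ℤ) := by
  ext n
  have hstep (t : ℕ) : ((μ * n + a + (t + 1)).choose (i + 1) : ℤ) - (μ * n + a + t).choose (i + 1)
      = (μ * n + (a + t)).choose i := by
    rw [← add_assoc, Nat.choose_succ_succ', add_assoc]; push_cast; ring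
  rw [Finset.sum_apply, sum_congr rfl fun t _ => (hstep t).symm,
    sum_range_sub fun t => ((μ * n + a + t).choose (i + 1) : ℤ)]
  simp [fwdDiff, mul_add_one, add_right_comm _ μ a]

theorem fwdDiff_iter_choose_mul_add (μ i a : ℕ) :
    (Δ_[1])^[i + 1] (fun n : ℕ => ((μ * n + a).choose i : ℤ)) = 0 := by
  induction i generalizing a with
  | zero => ext; simp [fwdDiff]
  | succ i ih =>
    rw [Function.iterate_succ_apply, fwdDiff_choose_mul_add, fwdDiff_iter_finsetSum]
    exact sum_eq_zero fun t _ => ih (a + t)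

def HasDvdBinomialExpansion (d : ℤ) (k : ℕ) (f : ℕ → ℤ) : Prop :=
  ∃ c : ℕ → ℤ, (∀ j, d ∣ c j) ∧ ∀ n, f n = ∑ j ∈ Icc 1 k, c j * n.choose j

theorem HasDvdBinomialExpansion.dvd {d : ℤ} {k : ℕ} {f : ℕ → ℤ}
    (hf : HasDvdBinomialExpansion d k f) (n : ℕ) : d ∣ f n := by
  obtain ⟨c, hc, hf⟩ := hf
  exact hf n ▸ dvd_sum fun j _ => (hc j).mul_right _

theorem hasDvdBinomialExpansion_choose_mul {k i : ℕ} (hi : i ∈ Icc 1 k) (μ : ℕ) :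
    HasDvdBinomialExpansion (Mcal μ k) k fun n => (μ * n).choose i := by
  set f : ℕ → ℤ := fun n => (μ * n).choose i
  refine ⟨fun j => (Δ_[1])^[j] f 0, fun j => dvd_fwdDiff_iter 1 (fun n => ?_) j 0, fun n => ?_⟩
  · exact Int.natCast_dvd_natCast.2 (Mcal_dvd_choose_mul hi μ n)
  · have hf : (Δ_[1])^[k + 1] f = 0 :=
      fwdDiff_iter_eq_zero_of_le (by simpa only [add_zero] using fwdDiff_iter_choose_mul_add μ i 0)
        (by simp only [mem_Icc] at hi; omega)
    have h0 : f 0 = 0 := by simp [f, Nat.choose_eq_zero_of_lt (mem_Icc.1 hi).1]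
    simpa [nsmul_eq_mul, mul_comm] using eq_sum_Icc_choose_smul_fwdDiff_iter hf h0 n

theorem sum_range_choose_eq_choose_add_choose (N i : ℕ) :
    ∑ j ∈ range (N + 1), (j.choose i : ℤ) = N.choose i + N.choose (i + 1) := by
  have := sum_range_sub (fun j => (j.choose (i + 1) : ℤ)) (N + 1)
  simp only [Nat.choose_succ_succ', Nat.cast_add, add_sub_cancel_right] at this
  rw [this]; simp

theorem HasDvdBinomialExpansion.sum_range_mul_add_one {d : ℤ} {k : ℕ} {f : ℕ → ℤ}
    (hf : HasDvdBinomialExpansion d k f) (μ : ℕ) :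
    HasDvdBinomialExpansion (d * Mcal μ (k + 1)) (k + 1)
      fun n => ∑ j ∈ range (μ * n + 1), f j := by
  obtain ⟨c, hc, hf⟩ := hf
  choose! E hEdvd hE using fun i (hi : i ∈ Icc 1 (k + 1)) => hasDvdBinomialExpansion_choose_mul hi μ
  beta_reduce at hE
  have hmem : ∀ i ∈ Icc 1 k, i ∈ Icc 1 (k + 1) ∧ i + 1 ∈ Icc 1 (k + 1) := by
    intro i hi; simp only [mem_Icc] at hi ⊢; omega
  refine ⟨fun j => ∑ i ∈ Icc 1 k, c i * (E i j + E (i + 1) j), fun j => ?_, fun n => ?_⟩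
  · exact dvd_sum fun i hi =>
      mul_dvd_mul (hc i) (dvd_add (hEdvd i (hmem i hi).1 j) (hEdvd (i + 1) (hmem i hi).2 j))
  calc ∑ j ∈ range (μ * n + 1), f j
      = ∑ i ∈ Icc 1 k, c i * ∑ j ∈ range (μ * n + 1), (j.choose i : ℤ) := by
        simp only [hf, mul_sum]; exact sum_comm
    _ = ∑ i ∈ Icc 1 k, c i * ((μ * n).choose i + (μ * n).choose (i + 1)) := by
        simp only [sum_range_choose_eq_choose_add_choose]
    _ = ∑ i ∈ Icc 1 k, c i * ∑ j ∈ Icc 1 (k + 1), (E i j + E (i + 1) j) * n.choose j := by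
        refine sum_congr rfl fun i hi => ?_
        rw [hE i (hmem i hi).1, hE (i + 1) (hmem i hi).2, ← sum_add_distrib]
        simp only [add_mul]
    _ = ∑ j ∈ Icc 1 (k + 1), (∑ i ∈ Icc 1 k, c i * (E i j + E (i + 1) j)) * n.choose j := by
        simp only [mul_sum, sum_mul, mul_assoc]; exact sum_comm

theorem coeff_U (m n : ℕ) (f : PowerSeries ℤ) : coeff n (U m f) = coeff (m * n) f :=
  coeff_mk _ _

theorem coeff_invUnitsSub_one_mul (f : PowerSeries ℤ) (N : ℕ) :
    coeff N (invUnitsSub (1 : ℤˣ) * f) = ∑ j ∈ range (N + 1), coeff j f := by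
  rw [mul_comm, coeff_mul, Nat.sum_antidiagonal_eq_sum_range_succ_mk]
  simp [coeff_invUnitsSub]

theorem Hser_append_singleton (l : List ℕ) (μ : ℕ) :
    Hser (l ++ [μ]) = U μ (invUnitsSub (1 : ℤˣ) * Hser l) := by
  simp [Hser, HserRev]

theorem coeff_Hser_singleton (μ n : ℕ) : coeff n (Hser [μ]) = μ * n := by
  rw [← List.nil_append [μ], Hser_append_singleton, coeff_U, coeff_invUnitsSub_one_mul,
    sum_range_succ']
  simp [Hser, HserRev, coeff_invUnitsSub]

theorem sort_Icc_one (r : ℕ) : (Icc 1 r).sort (· ≤ ·) = List.range' 1 r := by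
  rw [← (List.toFinset_sort _ List.nodup_range').2 (List.pairwise_le_range' 1)]
  congr; ext; simp; omega

theorem sort_Icc_one_add_one (r : ℕ) :
    (Icc 1 (r + 1)).sort (· ≤ ·) = (Icc 1 r).sort (· ≤ ·) ++ [r + 1] := by
  simp [sort_Icc_one, List.range'_concat, add_comm]

theorem hasDvdBinomialExpansion_coeff_Hser (m : ℕ → ℕ) (r : ℕ) :
    HasDvdBinomialExpansion (∏ t ∈ Icc 1 (r + 1), Mcal (m t) t : ℕ) (r + 1)
      fun n => coeff n (Hser (((Icc 1 (r + 1)).sort (· ≤ ·)).map m)) := by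
  induction r with
  | zero =>
    refine ⟨fun _ => m 1, fun _ => by simp [Mcal], fun n => ?_⟩
    simp [coeff_Hser_singleton]
  | succ r ih =>
    rw [prod_Icc_succ_top (by omega), Nat.cast_mul, sort_Icc_one_add_one, List.map_append,
      List.map_singleton]
    simp only [Hser_append_singleton, coeff_U, coeff_invUnitsSub_one_mul]
    exact ih.sum_range_mul_add_one _

theorem Mcal_prod_dvd_coeff_H_general (r : ℕ) (m : ℕ → ℕ) (n : ℕ) :
    ((∏ t ∈ Finset.Icc 1 r, Mcal (m t) t : ℕ) : ℤ) ∣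
      PowerSeries.coeff n (Hser (((Finset.Icc 1 r).sort (· ≤ ·)).map m)) := by
  cases r with
  | zero => simp
  | succ r => exact (hasDvdBinomialExpansion_coeff_Hser m r).dvd n

/-- Every coefficient of `H_{(m₁,…,m_r)}` is divisible by `∏_{t=1}^{r} 𝓜(m_t, t)`. -/
theorem Mcal_prod_dvd_coeff_H (r : ℕ) (hr : 1 ≤ r) (m : ℕ → ℕ)
    (hm : ∀ j, 1 ≤ j → j ≤ r → 2 ≤ m j) (n : ℕ) :
    ((∏ t ∈ Finset.Icc 1 r, Mcal (m t) t : ℕ) : ℤ) ∣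
      PowerSeries.coeff n (Hser (((Finset.Icc 1 r).sort (· ≤ ·)).map m)) :=
  Mcal_prod_dvd_coeff_H_general r m n
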